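/- Suppose each composite map φ_i(x) = F_i(G(x)) is convex with gradient ∇φ_i(x) = (∇G(x))ᵀ∇F_i(G(x)) that is L_f-Lipschitz in x, let h : ℝ^N → ℝ be convex, and let x* be a minimizer of H(x) = (1/n₁)∑_i F_i(G(x)) + h(x). Fix x, x̃ ∈ ℝ^N and a batch size b₁ ≥ 1, and for an index tuple ι ∈ {1,…,n₁}^{b₁} define u(ι) = (1/b₁)∑_{k=1}^{b₁}[(∇G(x))ᵀ∇F_{ι_k}(G(x)) − (∇G(x̃))ᵀ∇F_{ι_k}(G(x̃))] + ∇f(x̃). Then the uniform average over all tuples ι ∈ {1,…,n₁}^{b₁} satisfies (1/n₁^{b₁})·∑_{ι} ‖u(ι) − ∇f(x)‖² ≤ 4L_f·[(H(x) − H(x*)) + (H(x̃) − H(x*))]. -/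

import Mathlib

open scoped BigOperators RealInnerProductSpace
open Finset

noncomputable section

/-- ℝ^N as a Euclidean (inner product) space. -/
abbrev En (N : ℕ) : Type := EuclideanSpace ℝ (Fin N)

/-- Hilbert–Schmidt (Frobenius) norm of a continuous linear map between Euclidean spaces. -/
def hsNorm {N M : ℕ} (T : En N →L[ℝ] En M) : ℝ :=
  Real.sqrt (∑ j : Fin N, ‖T (EuclideanSpace.single j 1)‖ ^ 2)

/-- G(x) = (1/n₂) ∑ⱼ Gⱼ(x). -/
def Gbar {N M n₂ : ℕ} (Gf : Fin n₂ → En N → En M) (x : En N) : En M :=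
  (n₂ : ℝ)⁻¹ • ∑ j, Gf j x

/-- ∇G(x) = (1/n₂) ∑ⱼ ∇Gⱼ(x). -/
def DGbar {N M n₂ : ℕ} (Gf : Fin n₂ → En N → En M) (x : En N) : En N →L[ℝ] En M :=
  (n₂ : ℝ)⁻¹ • ∑ j, fderiv ℝ (Gf j) x

/-- f(x) = (1/n₁) ∑ᵢ Fᵢ(G(x)). -/
def fComp {N M n₁ n₂ : ℕ} (F : Fin n₁ → En M → ℝ) (Gf : Fin n₂ → En N → En M) (x : En N) : ℝ :=
  (n₁ : ℝ)⁻¹ * ∑ i, F i (Gbar Gf x)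

/-- ∇f(x) = (∇G(x))ᵀ ((1/n₁) ∑ᵢ ∇Fᵢ(G(x))). -/
def gradf {N M n₁ n₂ : ℕ} (F : Fin n₁ → En M → ℝ) (Gf : Fin n₂ → En N → En M) (x : En N) :
    En N :=
  ContinuousLinearMap.adjoint (DGbar Gf x) ((n₁ : ℝ)⁻¹ • ∑ i, gradient (F i) (Gbar Gf x))

/-- Ĝ(a) = G(x̃) − (1/A) ∑ₖ (G_{aₖ}(x̃) − G_{aₖ}(x)). -/
def Ghat {N M n₂ A : ℕ} (Gf : Fin n₂ → En N → En M) (x xt : En N) (a : Fin A → Fin n₂) :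
    En M :=
  Gbar Gf xt - (A : ℝ)⁻¹ • ∑ k, (Gf (a k) xt - Gf (a k) x)

/-- D̂(b) = ∇G(x̃) − (1/B) ∑ₖ (∇G_{bₖ}(x̃) − ∇G_{bₖ}(x)). -/
def Dhat {N M n₂ B : ℕ} (Gf : Fin n₂ → En N → En M) (x xt : En N) (b : Fin B → Fin n₂) :
    En N →L[ℝ] En M :=
  DGbar Gf xt - (B : ℝ)⁻¹ • ∑ k, (fderiv ℝ (Gf (b k)) xt - fderiv ℝ (Gf (b k)) x)

/-- The VRSC-PG gradient estimator v(ι,a,b). -/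
def vEst {N M n₁ n₂ b₁ A B : ℕ} (F : Fin n₁ → En M → ℝ) (Gf : Fin n₂ → En N → En M)
    (x xt : En N) (ι : Fin b₁ → Fin n₁) (a : Fin A → Fin n₂) (b : Fin B → Fin n₂) : En N :=
  (b₁ : ℝ)⁻¹ • ∑ k,
      (ContinuousLinearMap.adjoint (Dhat Gf x xt b) (gradient (F (ι k)) (Ghat Gf x xt a))
        - ContinuousLinearMap.adjoint (DGbar Gf xt) (gradient (F (ι k)) (Gbar Gf xt)))
    + gradf F Gf xt

/-- Sample space for one iteration: an index tuple (ι, a, b). -/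
abbrev Tup (n₁ n₂ b₁ A B : ℕ) : Type :=
  (Fin b₁ → Fin n₁) × (Fin A → Fin n₂) × (Fin B → Fin n₂)

end

/-!
Write `gᵢ = ∇φᵢ` and `wᵢ = gᵢ x - gᵢ x̃`. The error `u(ι) - ∇f(x)` is the mean over `k` of the
centred samples `w_{ιₖ} - w̄`, so by Jensen its average square over all tuples is at most the
variance of `w`, hence at most the mean of `‖wᵢ‖² ≤ 2 ‖gᵢ x - gᵢ x*‖² + 2 ‖gᵢ x̃ - gᵢ x*‖²`.
Co-coercivity of the gradient of a convex `L_f`-smooth function bounds `‖gᵢ z - gᵢ x*‖²` by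
`2 L_f (φᵢ z - φᵢ x* - ⟪gᵢ x*, z - x*⟫)`; averaging over `i` and using the optimality condition
`-⟪∇f x*, z - x*⟫ ≤ h z - h x*` of the minimizer turns this into `2 L_f (H z - H x*)`.
-/

section Gradient

variable {E : Type*} [NormedAddCommGroup E] [InnerProductSpace ℝ E] [CompleteSpace E]
  {φ : E → ℝ} {g : E → E}

theorem HasGradientAt.hasDerivAt_add_smul {G z d : E} {t : ℝ}
    (hG : HasGradientAt φ G (z + t • d)) :
    HasDerivAt (fun s : ℝ => φ (z + s • d)) ⟪G, d⟫ t := by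
  have hline : HasDerivAt (fun s : ℝ => z + s • d) d t := by
    simpa using ((hasDerivAt_id t).smul_const d).const_add z
  have := (hasGradientAt_iff_hasFDerivAt.1 hG).comp_hasDerivAt t hline
  simp only [InnerProductSpace.toDual_apply_apply] at this
  exact this

theorem ConvexOn.add_inner_le_of_hasGradientAt (hφ : ConvexOn ℝ Set.univ φ) {G y : E}
    (hG : HasGradientAt φ G y) (x : E) : φ y + ⟪G, x - y⟫ ≤ φ x := by
  have hline : ConvexOn ℝ Set.univ fun t : ℝ => φ (y + t • (x - y)) := by
    simpa [Function.comp_def, AffineMap.lineMap_apply_module', add_comm] using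
      hφ.comp_affineMap (AffineMap.lineMap y x)
  have := hline.le_slope_of_hasDerivAt (Set.mem_univ 0) (Set.mem_univ 1) zero_lt_one
    (HasGradientAt.hasDerivAt_add_smul (by simpa using hG))
  norm_num [slope_def_field] at this
  linarith

theorem le_add_inner_add_sq_of_lipschitz_gradient (hg : ∀ z, HasGradientAt φ (g z) z) {L : ℝ}
    (hlip : ∀ a b, ‖g a - g b‖ ≤ L * ‖a - b‖) (z w : E) :
    φ w ≤ φ z + ⟪g z, w - z⟫ + L / 2 * ‖w - z‖ ^ 2 := by
  set d := w - z
  -- the claim is `χ 1 ≤ χ 0`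
  set χ : ℝ → ℝ := fun t => φ (z + t • d) - t * ⟪g z, d⟫ - L / 2 * t ^ 2 * ‖d‖ ^ 2
  have hχ : ∀ t : ℝ, HasDerivAt χ (⟪g (z + t • d) - g z, d⟫ - L * t * ‖d‖ ^ 2) t := by
    intro t
    have hφ : HasDerivAt (fun s : ℝ => φ (z + s • d)) ⟪g (z + t • d), d⟫ t :=
      (hg _).hasDerivAt_add_smul
    have hlin : HasDerivAt (fun s : ℝ => s * ⟪g z, d⟫) ⟪g z, d⟫ t := by
      simpa using (hasDerivAt_id t).mul_const ⟪g z, d⟫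
    have hquad : HasDerivAt (fun s : ℝ => L / 2 * s ^ 2 * ‖d‖ ^ 2) (L * t * ‖d‖ ^ 2) t :=
      (((hasDerivAt_pow 2 t).const_mul (L / 2)).mul_const _).congr_deriv
        (by simp only [Nat.cast_ofNat, Nat.reduceSub, pow_one]; ring)
    exact ((hφ.sub hlin).sub hquad).congr_deriv (by rw [inner_sub_left])
  have hχ' : ∀ t > 0, ⟪g (z + t • d) - g z, d⟫ - L * t * ‖d‖ ^ 2 ≤ 0 := by
    intro t ht
    have := (real_inner_le_norm _ _).trans
      (mul_le_mul_of_nonneg_right (hlip (z + t • d) z) (norm_nonneg d))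
    rw [add_sub_cancel_left, norm_smul, Real.norm_of_nonneg ht.le] at this
    linarith
  have hanti : AntitoneOn χ (Set.Ici 0) :=
    antitoneOn_of_hasDerivWithinAt_nonpos (convex_Ici 0)
      (fun t _ => (hχ t).continuousAt.continuousWithinAt)
      (fun t _ => (hχ t).hasDerivWithinAt) (fun t ht => hχ' t (by simpa using ht))
  have := hanti Set.self_mem_Ici (Set.mem_Ici.2 zero_le_one) zero_le_one
  norm_num [χ, d] at this
  linarith

theorem le_sub_sq_norm_div_of_lipschitz_gradient (hg : ∀ z, HasGradientAt φ (g z) z) {L : ℝ}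
    (hL : 0 < L) (hlip : ∀ a b, ‖g a - g b‖ ≤ L * ‖a - b‖) (z : E) :
    φ (z - L⁻¹ • g z) ≤ φ z - ‖g z‖ ^ 2 / (2 * L) := by
  have := le_add_inner_add_sq_of_lipschitz_gradient hg hlip z (z - L⁻¹ • g z)
  rw [sub_sub_cancel_left, inner_neg_right, norm_neg, inner_smul_right, norm_smul,
    real_inner_self_eq_norm_sq, Real.norm_of_nonneg (inv_nonneg.2 hL.le)] at this
  convert this using 1
  field_simp
  ring

theorem ConvexOn.sq_norm_sub_gradient_le (hφ : ConvexOn ℝ Set.univ φ)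
    (hg : ∀ z, HasGradientAt φ (g z) z) {L : ℝ} (hL : 0 < L)
    (hlip : ∀ a b, ‖g a - g b‖ ≤ L * ‖a - b‖) (x y : E) :
    ‖g x - g y‖ ^ 2 ≤ 2 * L * (φ x - φ y - ⟪g y, x - y⟫) := by
  -- `y` minimizes `ψ`, and a gradient step of length `L⁻¹` from `x` lowers `ψ` by `‖∇ψ x‖² / 2L`
  set ψ : E → ℝ := fun z => φ z - ⟪g y, z⟫
  have hψ : ∀ z, HasGradientAt ψ (g z - g y) z := by
    intro z
    rw [hasGradientAt_iff_hasFDerivAt, map_sub]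
    exact (hasGradientAt_iff_hasFDerivAt.1 (hg z)).sub
      (InnerProductSpace.toDual ℝ E (g y)).hasFDerivAt
  have hψlip : ∀ a b, ‖(g a - g y) - (g b - g y)‖ ≤ L * ‖a - b‖ := by
    simpa only [sub_sub_sub_cancel_right] using hlip
  have hmin : ψ y ≤ ψ (x - L⁻¹ • (g x - g y)) := by
    have := hφ.add_inner_le_of_hasGradientAt (hg y) (x - L⁻¹ • (g x - g y))
    simp only [ψ, inner_sub_right] at this ⊢
    linarith
  have hstep := le_sub_sq_norm_div_of_lipschitz_gradient hψ hL hψlip x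
  simp only [ψ, inner_sub_right] at hmin hstep ⊢
  have key : ‖g x - g y‖ ^ 2 / (2 * L) ≤ φ x - φ y - (⟪g y, x⟫ - ⟪g y, y⟫) := by linarith
  rwa [div_le_iff₀ (by positivity), mul_comm] at key

theorem IsMinOn.neg_inner_le_sub_of_hasGradientAt {f h : E → ℝ} {G xs : E}
    (hmin : IsMinOn (fun z => f z + h z) Set.univ xs) (hf : HasGradientAt f G xs)
    (hh : ConvexOn ℝ Set.univ h) (x : E) :
    -⟪G, x - xs⟫ ≤ h x - h xs := by
  set p : ℝ → ℝ := fun t => f (xs + t • (x - xs))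
  have hp : HasDerivAt p ⟪G, x - xs⟫ 0 := HasGradientAt.hasDerivAt_add_smul (by simpa using hf)
  -- convexity of `h` along the segment bounds the slopes of `p` at `0⁺` from below
  have hslope : ∀ᶠ t in nhdsWithin 0 (Set.Ioi 0), -(h x - h xs) ≤ slope p 0 t := by
    filter_upwards [Ioo_mem_nhdsGT (zero_lt_one' ℝ)] with t ⟨ht0, ht1⟩
    have hseg : h (xs + t • (x - xs)) ≤ (1 - t) * h xs + t * h x := by
      have := hh.2 (Set.mem_univ xs) (Set.mem_univ x) (sub_nonneg.2 ht1.le) ht0.le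
        (sub_add_cancel 1 t)
      rwa [show (1 - t) • xs + t • x = xs + t • (x - xs) by module, smul_eq_mul,
        smul_eq_mul] at this
    have hm : f xs + h xs ≤ f (xs + t • (x - xs)) + h (xs + t • (x - xs)) :=
      hmin (Set.mem_univ _)
    rw [slope_def_field, sub_zero, le_div_iff₀ ht0]
    simp only [p, zero_smul, add_zero]
    nlinarith
  have hlim : Filter.Tendsto (slope p 0) (nhdsWithin 0 (Set.Ioi 0)) (nhds ⟪G, x - xs⟫) :=
    (hasDerivAt_iff_tendsto_slope.1 hp).mono_left
    (nhdsWithin_mono 0 fun t ht => ne_of_gt ht)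
  linarith [ge_of_tendsto hlim hslope]

theorem HasGradientAt.mean {n : ℕ} {φ : Fin n → E → ℝ} {g : Fin n → E} {x : E}
    (hφ : ∀ i, HasGradientAt (φ i) (g i) x) :
    HasGradientAt (fun z => (n : ℝ)⁻¹ * ∑ i, φ i z) ((n : ℝ)⁻¹ • ∑ i, g i) x := by
  rw [hasGradientAt_iff_hasFDerivAt, map_smul, map_sum]
  exact (HasFDerivAt.fun_sum fun i _ => hasGradientAt_iff_hasFDerivAt.1 (hφ i)).const_mul _

end Gradient

theorem Fintype.sum_fun_apply {α β M : Type*} [Fintype α] [Fintype β] [DecidableEq β]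
    [AddCommMonoid M] (f : α → M) (k : β) :
    ∑ ι : β → α, f (ι k) = (Fintype.card α ^ (Fintype.card β - 1)) • ∑ a, f a := by
  rw [← (Equiv.funSplitAt k α).symm.sum_comp, Fintype.sum_prod_type]
  simp only [Equiv.funSplitAt_symm_apply, dite_true, sum_const, card_univ, Fintype.card_fun,
    Fintype.card_subtype_compl, Fintype.card_unique, sum_nsmul]

section FiniteMeans

variable {E : Type*} [NormedAddCommGroup E] [InnerProductSpace ℝ E]

theorem norm_mean_sq_le {m : ℕ} (v : Fin m → E) :
    ‖(m : ℝ)⁻¹ • ∑ k, v k‖ ^ 2 ≤ (m : ℝ)⁻¹ * ∑ k, ‖v k‖ ^ 2 := by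
  rcases m.eq_zero_or_pos with rfl | hm
  · simp
  have hsum : ‖∑ k, v k‖ ^ 2 ≤ m * ∑ k, ‖v k‖ ^ 2 := by
    calc ‖∑ k, v k‖ ^ 2 ≤ (∑ k, ‖v k‖) ^ 2 := by gcongr; exact norm_sum_le _ _
      _ ≤ m * ∑ k, ‖v k‖ ^ 2 := by
        simpa using sq_sum_le_card_mul_sum_sq (s := univ) (f := fun k => ‖v k‖)
  rw [norm_smul, mul_pow, Real.norm_of_nonneg (by positivity)]
  calc (m : ℝ)⁻¹ ^ 2 * ‖∑ k, v k‖ ^ 2 ≤ (m : ℝ)⁻¹ ^ 2 * (m * ∑ k, ‖v k‖ ^ 2) := by gcongr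
    _ = (m : ℝ)⁻¹ * ∑ k, ‖v k‖ ^ 2 := by field_simp

theorem sum_norm_sub_mean_sq_le {m : ℕ} (hm : 0 < m) (v : Fin m → E) :
    ∑ i, ‖v i - (m : ℝ)⁻¹ • ∑ j, v j‖ ^ 2 ≤ ∑ i, ‖v i‖ ^ 2 := by
  set vbar := (m : ℝ)⁻¹ • ∑ j, v j
  -- `∑ ‖vᵢ - vbar‖² = ∑ ‖vᵢ‖² - m ‖vbar‖²`
  have hcross : ∑ i, ⟪v i, vbar⟫ = m * ‖vbar‖ ^ 2 := by
    rw [← sum_inner, show ∑ i, v i = (m : ℝ) • vbar by simp [vbar, smul_smul, hm.ne'],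
      real_inner_smul_left, real_inner_self_eq_norm_sq]
  simp only [norm_sub_sq_real, sum_add_distrib, sum_sub_distrib, ← mul_sum, hcross, sum_const,
    card_univ, Fintype.card_fin, nsmul_eq_mul]
  nlinarith [sq_nonneg ‖vbar‖]

theorem mean_pi_norm_mean_sq_le {n b : ℕ} (hn : 0 < n) (hb : 0 < b) (v : Fin n → E) :
    ((n : ℝ) ^ b)⁻¹ * ∑ ι : Fin b → Fin n, ‖(b : ℝ)⁻¹ • ∑ k, v (ι k)‖ ^ 2
      ≤ (n : ℝ)⁻¹ * ∑ i, ‖v i‖ ^ 2 := by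
  have hcount : ∑ ι : Fin b → Fin n, (b : ℝ)⁻¹ * ∑ k, ‖v (ι k)‖ ^ 2
      = (n : ℝ) ^ (b - 1) * ∑ i, ‖v i‖ ^ 2 := by
    rw [← mul_sum, sum_comm, sum_congr rfl fun k _ => Fintype.sum_fun_apply (‖v ·‖ ^ 2) k]
    simp only [Fintype.card_fin, sum_const, card_univ, nsmul_eq_mul, Nat.cast_pow]
    field_simp
  calc ((n : ℝ) ^ b)⁻¹ * ∑ ι : Fin b → Fin n, ‖(b : ℝ)⁻¹ • ∑ k, v (ι k)‖ ^ 2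
      ≤ ((n : ℝ) ^ b)⁻¹ * ∑ ι : Fin b → Fin n, (b : ℝ)⁻¹ * ∑ k, ‖v (ι k)‖ ^ 2 := by
        gcongr with ι; exact norm_mean_sq_le _
    _ = (n : ℝ)⁻¹ * ∑ i, ‖v i‖ ^ 2 := by
        rw [hcount, ← mul_assoc, ← pow_sub_one_mul hb.ne' (n : ℝ)]
        field_simp

end FiniteMeans

section VarianceReduction

variable {E : Type*} [NormedAddCommGroup E] [InnerProductSpace ℝ E] [CompleteSpace E]
  {n : ℕ} {φ : Fin n → E → ℝ} {g : Fin n → E → E} {h : E → ℝ} {L : ℝ} {xs : E}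

theorem mean_sq_norm_sub_gradient_le (hφ : ∀ i, ConvexOn ℝ Set.univ (φ i))
    (hg : ∀ i z, HasGradientAt (φ i) (g i z) z) (hL : 0 < L)
    (hlip : ∀ i a b, ‖g i a - g i b‖ ≤ L * ‖a - b‖) (hh : ConvexOn ℝ Set.univ h)
    (hmin : IsMinOn (fun z => (n : ℝ)⁻¹ * ∑ i, φ i z + h z) Set.univ xs) (z : E) :
    (n : ℝ)⁻¹ * ∑ i, ‖g i z - g i xs‖ ^ 2
      ≤ 2 * L * (((n : ℝ)⁻¹ * ∑ i, φ i z + h z) - ((n : ℝ)⁻¹ * ∑ i, φ i xs + h xs)) := by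
  have hcoco : ∑ i, ‖g i z - g i xs‖ ^ 2
      ≤ 2 * L * (∑ i, φ i z - ∑ i, φ i xs - ⟪∑ i, g i xs, z - xs⟫) := by
    rw [sum_inner, ← sum_sub_distrib, ← sum_sub_distrib, mul_sum]
    exact sum_le_sum fun i _ => (hφ i).sq_norm_sub_gradient_le (hg i) hL (hlip i) z xs
  have hopt := hmin.neg_inner_le_sub_of_hasGradientAt (HasGradientAt.mean fun i => hg i xs) hh z
  rw [real_inner_smul_left] at hopt
  have hn : (0 : ℝ) ≤ (n : ℝ)⁻¹ := by positivity
  nlinarith [mul_le_mul_of_nonneg_left hcoco hn]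

theorem mean_sq_norm_variance_reduced_sub_le {b : ℕ} (hn : 0 < n) (hb : 0 < b)
    (hφ : ∀ i, ConvexOn ℝ Set.univ (φ i)) (hg : ∀ i z, HasGradientAt (φ i) (g i z) z)
    (hL : 0 < L) (hlip : ∀ i a b, ‖g i a - g i b‖ ≤ L * ‖a - b‖) (hh : ConvexOn ℝ Set.univ h)
    (hmin : IsMinOn (fun z => (n : ℝ)⁻¹ * ∑ i, φ i z + h z) Set.univ xs) (x xt : E) :
    ((n : ℝ) ^ b)⁻¹ * ∑ ι : Fin b → Fin n,
        ‖((b : ℝ)⁻¹ • ∑ k, (g (ι k) x - g (ι k) xt) + (n : ℝ)⁻¹ • ∑ i, g i xt)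
          - (n : ℝ)⁻¹ • ∑ i, g i x‖ ^ 2
      ≤ 4 * L * ((((n : ℝ)⁻¹ * ∑ i, φ i x + h x) - ((n : ℝ)⁻¹ * ∑ i, φ i xs + h xs))
          + (((n : ℝ)⁻¹ * ∑ i, φ i xt + h xt) - ((n : ℝ)⁻¹ * ∑ i, φ i xs + h xs))) := by
  set w : Fin n → E := fun i => g i x - g i xt
  set wbar := (n : ℝ)⁻¹ • ∑ i, w i
  have herr : ∀ ι : Fin b → Fin n,
      ((b : ℝ)⁻¹ • ∑ k, (g (ι k) x - g (ι k) xt) + (n : ℝ)⁻¹ • ∑ i, g i xt)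
          - (n : ℝ)⁻¹ • ∑ i, g i x
        = (b : ℝ)⁻¹ • ∑ k, (w (ι k) - wbar) := by
    intro ι
    have hb' : (b : ℝ) ≠ 0 := by positivity
    simp only [wbar, w, sum_sub_distrib, sum_const, card_univ, Fintype.card_fin, smul_sub,
      ← Nat.cast_smul_eq_nsmul ℝ, smul_smul, inv_mul_cancel_left₀ hb']
    abel
  have hsplit : ∀ i, ‖w i‖ ^ 2 ≤ 2 * ‖g i x - g i xs‖ ^ 2 + 2 * ‖g i xt - g i xs‖ ^ 2 := by
    intro i
    calc ‖w i‖ ^ 2 = ‖(g i x - g i xs) - (g i xt - g i xs)‖ ^ 2 := by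
          simp only [w, sub_sub_sub_cancel_right]
      _ ≤ (‖g i x - g i xs‖ + ‖g i xt - g i xs‖) ^ 2 := by gcongr; exact norm_sub_le _ _
      _ ≤ _ := by linarith [add_sq_le (a := ‖g i x - g i xs‖) (b := ‖g i xt - g i xs‖)]
  have hx := mean_sq_norm_sub_gradient_le hφ hg hL hlip hh hmin x
  have hxt := mean_sq_norm_sub_gradient_le hφ hg hL hlip hh hmin xt
  calc _ = ((n : ℝ) ^ b)⁻¹ * ∑ ι : Fin b → Fin n, ‖(b : ℝ)⁻¹ • ∑ k, (w (ι k) - wbar)‖ ^ 2 := by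
        simp only [herr]
    _ ≤ (n : ℝ)⁻¹ * ∑ i, ‖w i - wbar‖ ^ 2 := mean_pi_norm_mean_sq_le hn hb (w · - wbar)
    _ ≤ (n : ℝ)⁻¹ * ∑ i, ‖w i‖ ^ 2 :=
        mul_le_mul_of_nonneg_left (sum_norm_sub_mean_sq_le hn w) (by positivity)
    _ ≤ (n : ℝ)⁻¹ * ∑ i, (2 * ‖g i x - g i xs‖ ^ 2 + 2 * ‖g i xt - g i xs‖ ^ 2) := by
        gcongr with i; exact hsplit i
    _ ≤ _ := by
        rw [sum_add_distrib, ← mul_sum, ← mul_sum]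
        linarith

end VarianceReduction

theorem gradf_eq_mean {N M n₁ n₂ : ℕ} (F : Fin n₁ → En M → ℝ) (Gf : Fin n₂ → En N → En M)
    (x : En N) :
    gradf F Gf x = (n₁ : ℝ)⁻¹ • ∑ i,
      ContinuousLinearMap.adjoint (DGbar Gf x) (gradient (F i) (Gbar Gf x)) := by
  rw [gradf, map_smul, map_sum]

theorem svrg_estimator_variance_bound_general
    (N M n₁ n₂ b₁ : ℕ) (hn₁ : 0 < n₁) (hb₁ : 1 ≤ b₁)
    (F : Fin n₁ → En M → ℝ) (Gf : Fin n₂ → En N → En M)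
    (h : En N → ℝ) (hconv : ConvexOn ℝ Set.univ h)
    (L_f : ℝ) (hLf : 0 < L_f)
    -- each composite map φᵢ = Fᵢ ∘ G is convex ...
    (hφconv : ∀ i, ConvexOn ℝ Set.univ (fun x : En N => F i (Gbar Gf x)))
    -- ... with gradient ∇φᵢ(x) = (∇G(x))ᵀ∇Fᵢ(G(x)) ...
    (hφgrad : ∀ (i : Fin n₁) (x : En N),
      HasGradientAt (fun z : En N => F i (Gbar Gf z))
        (ContinuousLinearMap.adjoint (DGbar Gf x) (gradient (F i) (Gbar Gf x))) x)
    -- ... that is L_f-Lipschitz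
    (hφlip : ∀ (i : Fin n₁) (x y : En N),
      ‖ContinuousLinearMap.adjoint (DGbar Gf x) (gradient (F i) (Gbar Gf x))
        - ContinuousLinearMap.adjoint (DGbar Gf y) (gradient (F i) (Gbar Gf y))‖
        ≤ L_f * ‖x - y‖)
    -- x* is a minimizer of H = (1/n₁)∑ᵢ Fᵢ(G(·)) + h
    (xstar : En N)
    (hmin : ∀ z : En N, fComp F Gf xstar + h xstar ≤ fComp F Gf z + h z)
    -- the fixed points
    (x xt : En N) :
    ((n₁ : ℝ) ^ b₁)⁻¹ * ∑ ι : Fin b₁ → Fin n₁,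
        ‖((b₁ : ℝ)⁻¹ • ∑ k : Fin b₁,
            (ContinuousLinearMap.adjoint (DGbar Gf x) (gradient (F (ι k)) (Gbar Gf x))
              - ContinuousLinearMap.adjoint (DGbar Gf xt) (gradient (F (ι k)) (Gbar Gf xt)))
          + gradf F Gf xt) - gradf F Gf x‖ ^ 2
      ≤ 4 * L_f * ((fComp F Gf x + h x - (fComp F Gf xstar + h xstar))
          + (fComp F Gf xt + h xt - (fComp F Gf xstar + h xstar))) := by
  simp only [gradf_eq_mean]
  exact mean_sq_norm_variance_reduced_sub_le hn₁ hb₁ hφconv hφgrad hLf hφlip hconv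
    (fun z _ => hmin z) x xt

/-- variance bound for the (exact-inner-function) SVRG-type estimator u(ι). -/
theorem svrg_estimator_variance_bound
    (N M n₁ n₂ b₁ : ℕ) (hn₁ : 0 < n₁) (hn₂ : 0 < n₂) (hb₁ : 1 ≤ b₁)
    (F : Fin n₁ → En M → ℝ) (Gf : Fin n₂ → En N → En M)
    (hF : ∀ i, ContDiff ℝ 1 (F i)) (hGf : ∀ j, ContDiff ℝ 1 (Gf j))
    (h : En N → ℝ) (hconv : ConvexOn ℝ Set.univ h)
    (L_f : ℝ) (hLf : 0 < L_f)
    -- each composite map φᵢ = Fᵢ ∘ G is convex ...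
    (hφconv : ∀ i, ConvexOn ℝ Set.univ (fun x : En N => F i (Gbar Gf x)))
    -- ... with gradient ∇φᵢ(x) = (∇G(x))ᵀ∇Fᵢ(G(x)) ...
    (hφgrad : ∀ (i : Fin n₁) (x : En N),
      HasGradientAt (fun z : En N => F i (Gbar Gf z))
        (ContinuousLinearMap.adjoint (DGbar Gf x) (gradient (F i) (Gbar Gf x))) x)
    -- ... that is L_f-Lipschitz
    (hφlip : ∀ (i : Fin n₁) (x y : En N),
      ‖ContinuousLinearMap.adjoint (DGbar Gf x) (gradient (F i) (Gbar Gf x))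
        - ContinuousLinearMap.adjoint (DGbar Gf y) (gradient (F i) (Gbar Gf y))‖
        ≤ L_f * ‖x - y‖)
    -- x* is a minimizer of H = (1/n₁)∑ᵢ Fᵢ(G(·)) + h
    (xstar : En N)
    (hmin : ∀ z : En N, fComp F Gf xstar + h xstar ≤ fComp F Gf z + h z)
    -- the fixed points
    (x xt : En N) :
    ((n₁ : ℝ) ^ b₁)⁻¹ * ∑ ι : Fin b₁ → Fin n₁,
        ‖((b₁ : ℝ)⁻¹ • ∑ k : Fin b₁,
            (ContinuousLinearMap.adjoint (DGbar Gf x) (gradient (F (ι k)) (Gbar Gf x))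
              - ContinuousLinearMap.adjoint (DGbar Gf xt) (gradient (F (ι k)) (Gbar Gf xt)))
          + gradf F Gf xt) - gradf F Gf x‖ ^ 2
      ≤ 4 * L_f * ((fComp F Gf x + h x - (fComp F Gf xstar + h xstar))
          + (fComp F Gf xt + h xt - (fComp F Gf xstar + h xstar))) :=
  svrg_estimator_variance_bound_general N M n₁ n₂ b₁ hn₁ hb₁ F Gf h hconv L_f hLf hφconv hφgrad
    hφlip xstar hmin x xt
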